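/- arXiv:1806.09586 — 4 statements merged into one kernel-verified Lean document; each statement's English description precedes it below -/
import Mathlib

section
/- Let n ≥ 2, R₀ > 0, r₀ > 0, let 𝒮 = {z ∈ ℂ : |Im z| < R₀}, and let ν ∈ ℝⁿ be a nonzero vector. Let a₁, a₂ : ℂ × ℂⁿ → ℂ be analytic on 𝒮 × B(0,r₀) ⊆ ℂ^{1+n}. Assume that for every s ∈ ℝ and every p ∈ 𝒞(r₀): (i) ∂_s a₁(s,p) = ∂_s a₂(s,p), and (ii) a₁(s,p) + (∇_p a₁(s,p))·p = a₂(s,p) + (∇_p a₂(s,p))·p. Then a₁(s,p) = a₂(s,p) for every s ∈ 𝒮 and every p ∈ 𝒞(r₀). (This is the uniqueness theorem for the linearized complex Calderón problem, Theorem 6.3 of the paper, with the equality of the linearized Dirichlet-to-Neumann maps unpacked at the boundary point 0 into the two explicit pieces of data (i) and (ii) produced by the constant solutions and by the linear solutions x ↦ p·x.) -/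
open scoped BigOperators
open Set Filter Metric

noncomputable section

/-- Bilinear (non-Hermitian) dot product on ℂⁿ. -/
def dotC {n : ℕ} (p q : EuclideanSpace ℂ (Fin n)) : ℂ := ∑ j, p j * q j

/-- A real vector viewed inside ℂⁿ. -/
def cplx {n : ℕ} (v : EuclideanSpace ℝ (Fin n)) : EuclideanSpace ℂ (Fin n) :=
  (WithLp.equiv 2 (Fin n → ℂ)).symm (fun j => (v j : ℂ))

/-- Partial derivative of `a` in the first (scalar) variable. -/
def dS {n : ℕ} (a : ℂ × EuclideanSpace ℂ (Fin n) → ℂ) (s : ℂ)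
    (p : EuclideanSpace ℂ (Fin n)) : ℂ :=
  fderiv ℂ a (s, p) (1, 0)

/-- Gradient of `a` in the second (vector) variable. -/
def gradP {n : ℕ} (a : ℂ × EuclideanSpace ℂ (Fin n) → ℂ) (s : ℂ)
    (p : EuclideanSpace ℂ (Fin n)) : EuclideanSpace ℂ (Fin n) :=
  (WithLp.equiv 2 (Fin n → ℂ)).symm
    (fun j => fderiv ℂ a (s, p) (0, EuclideanSpace.single j 1))

/-- The set 𝒞(r₀) of small isotropic vectors not orthogonal to ν. -/
def Ccone (n : ℕ) (r₀ : ℝ) (ν : EuclideanSpace ℝ (Fin n)) :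
    Set (EuclideanSpace ℂ (Fin n)) :=
  {p | ‖p‖ < r₀ ∧ dotC p p = 0 ∧ dotC p (cplx ν) ≠ 0}

lemma eucl_decomp {n:ℕ} (q : EuclideanSpace ℂ (Fin n)) :
    q = ∑ j, q j • EuclideanSpace.single j (1:ℂ) := by
  ext i
  rw [show ((∑ j, q j • EuclideanSpace.single j (1:ℂ)) i) = ∑ j, (q j • EuclideanSpace.single j (1:ℂ)) i from by rw [WithLp.ofLp_sum, Finset.sum_apply]]
  simp [EuclideanSpace.single_apply]

lemma dotC_gradP {n : ℕ} (a : ℂ × EuclideanSpace ℂ (Fin n) → ℂ) {s : ℂ}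
    {q : EuclideanSpace ℂ (Fin n)} :
    dotC (gradP a s q) q = fderiv ℂ a (s, q) (0, q) := by
  have h1 : ((0:ℂ), q) = ∑ j, q j • (((0:ℂ), EuclideanSpace.single j (1:ℂ)) : ℂ × EuclideanSpace ℂ (Fin n)) := by
    refine Prod.ext ?_ ?_
    · rw [Prod.fst_sum]; simp
    · rw [Prod.snd_sum]; simpa using eucl_decomp q
  rw [h1, map_sum]
  unfold dotC gradP
  simp only [WithLp.equiv_symm_apply, PiLp.toLp_apply, map_smul, smul_eq_mul]
  exact Finset.sum_congr rfl fun j _ => mul_comm _ _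

lemma dotC_smul_left {n : ℕ} (t : ℂ) (p q : EuclideanSpace ℂ (Fin n)) :
    dotC (t • p) q = t * dotC p q := by
  simp [dotC, Finset.mul_sum, mul_assoc]

lemma dotC_smul_right {n : ℕ} (t : ℂ) (p q : EuclideanSpace ℂ (Fin n)) :
    dotC p (t • q) = t * dotC p q := by
  simp only [dotC, Finset.mul_sum, PiLp.smul_apply, smul_eq_mul]
  exact Finset.sum_congr rfl fun j _ => by ring

lemma smul_mem_Ccone {n : ℕ} {r₀ : ℝ} {ν : EuclideanSpace ℝ (Fin n)}
    {p : EuclideanSpace ℂ (Fin n)} (hp : p ∈ Ccone n r₀ ν) {t : ℝ}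
    (ht0 : 0 < t) (ht1 : t ≤ 1) : ((t:ℂ) • p) ∈ Ccone n r₀ ν := by
  obtain ⟨h1, h2, h3⟩ := hp
  have htn : ‖((t:ℝ):ℂ)‖ = t := by
    rw [Complex.norm_real, Real.norm_eq_abs, abs_of_pos ht0]
  have htz : ((t:ℝ):ℂ) ≠ 0 := by
    exact_mod_cast Complex.ofReal_ne_zero.mpr ht0.ne'
  refine ⟨?_, ?_, ?_⟩
  · rw [norm_smul, htn]
    calc t * ‖p‖ ≤ 1 * ‖p‖ := by
          exact mul_le_mul_of_nonneg_right ht1 (norm_nonneg _)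
      _ = ‖p‖ := one_mul _
      _ < r₀ := h1
  · rw [dotC_smul_left, dotC_smul_right, h2, mul_zero, mul_zero]
  · rw [dotC_smul_left]
    exact mul_ne_zero htz h3


/-- Uniqueness for the linearized complex Calderón problem (Theorem 6.3). -/
theorem uniqueness_linearized_calderon {n : ℕ} (hn : 2 ≤ n) {R₀ r₀ : ℝ}
    (hR₀ : 0 < R₀) (hr₀ : 0 < r₀)
    (ν : EuclideanSpace ℝ (Fin n)) (hν : ν ≠ 0)
    (a₁ a₂ : ℂ × EuclideanSpace ℂ (Fin n) → ℂ)
    (ha₁ : DifferentiableOn ℂ a₁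
      (({z : ℂ | |z.im| < R₀}) ×ˢ (Metric.ball (0 : EuclideanSpace ℂ (Fin n)) r₀)))
    (ha₂ : DifferentiableOn ℂ a₂
      (({z : ℂ | |z.im| < R₀}) ×ˢ (Metric.ball (0 : EuclideanSpace ℂ (Fin n)) r₀)))
    (h1 : ∀ (s : ℝ), ∀ p ∈ Ccone n r₀ ν, dS a₁ (s : ℂ) p = dS a₂ (s : ℂ) p)
    (h2 : ∀ (s : ℝ), ∀ p ∈ Ccone n r₀ ν,
      a₁ ((s : ℂ), p) + dotC (gradP a₁ (s : ℂ) p) p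
        = a₂ ((s : ℂ), p) + dotC (gradP a₂ (s : ℂ) p) p) :
    ∀ (s : ℂ), |s.im| < R₀ → ∀ p ∈ Ccone n r₀ ν, a₁ (s, p) = a₂ (s, p) := by
  set S : Set ℂ := {z : ℂ | |z.im| < R₀} with hS
  set U : Set (ℂ × EuclideanSpace ℂ (Fin n)) :=
    S ×ˢ (Metric.ball (0 : EuclideanSpace ℂ (Fin n)) r₀) with hUdef
  have hSopen : IsOpen S := by
    have : S = (fun z : ℂ => |z.im|) ⁻¹' Set.Iio R₀ := rfl
    rw [this]
    exact isOpen_Iio.preimage (continuous_abs.comp Complex.continuous_im)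
  have hUopen : IsOpen U := hSopen.prod Metric.isOpen_ball
  set b : ℂ × EuclideanSpace ℂ (Fin n) → ℂ := fun x => a₁ x - a₂ x with hbdef
  have hb : DifferentiableOn ℂ b U := ha₁.sub ha₂
  have hmemU : ∀ (z : ℂ) (q : EuclideanSpace ℂ (Fin n)), |z.im| < R₀ → ‖q‖ < r₀ →
      (z, q) ∈ U := fun z q hz hq => ⟨hz, mem_ball_zero_iff.mpr hq⟩
  -- Step A : b vanishes for real s
  have keyA : ∀ (s : ℝ), ∀ p ∈ Ccone n r₀ ν, b ((s:ℂ), p) = 0 := by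
    intro s p hp
    have hsS : |((s:ℂ)).im| < R₀ := by simp [Complex.ofReal_im, hR₀]
    have hnp : ‖p‖ < r₀ := hp.1
    set F : ℂ → ℂ := fun t => b ((s:ℂ), t • p) with hFdef
    -- derivative of F
    have hF : ∀ t : ℂ, ‖t‖ ≤ 1 →
        HasDerivAt F (fderiv ℂ b ((s:ℂ), t • p) ((0:ℂ), p)) t := by
      intro t ht
      have hmem : ((s:ℂ), t • p) ∈ U := by
        refine hmemU _ _ hsS ?_
        calc ‖t • p‖ = ‖t‖ * ‖p‖ := norm_smul _ _
          _ ≤ 1 * ‖p‖ := mul_le_mul_of_nonneg_right ht (norm_nonneg _)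
          _ = ‖p‖ := one_mul _
          _ < r₀ := hnp
      have hdb : DifferentiableAt ℂ b ((s:ℂ), t • p) :=
        hb.differentiableAt (hUopen.mem_nhds hmem)
      have hγ : HasDerivAt (fun u : ℂ => (((s:ℂ), u • p) : ℂ × EuclideanSpace ℂ (Fin n)))
          (((0:ℂ), p) : ℂ × EuclideanSpace ℂ (Fin n)) t := by
        have h1' : HasDerivAt (fun u : ℂ => u • p) ((1:ℂ) • p) t :=
          (hasDerivAt_id t).smul_const p
        rw [one_smul] at h1'
        exact (hasDerivAt_const t ((s:ℂ))).prodMk h1'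
      exact hdb.hasFDerivAt.comp_hasDerivAt t hγ
    -- the Euler relation
    have hrel : ∀ q ∈ Ccone n r₀ ν,
        b ((s:ℂ), q) + fderiv ℂ b ((s:ℂ), q) ((0:ℂ), q) = 0 := by
      intro q hq
      have hmem : ((s:ℂ), q) ∈ U := hmemU _ _ hsS hq.1
      have hd₁ : DifferentiableAt ℂ a₁ ((s:ℂ), q) :=
        ha₁.differentiableAt (hUopen.mem_nhds hmem)
      have hd₂ : DifferentiableAt ℂ a₂ ((s:ℂ), q) :=
        ha₂.differentiableAt (hUopen.mem_nhds hmem)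
      have e₁ : dotC (gradP a₁ (s:ℂ) q) q = fderiv ℂ a₁ ((s:ℂ), q) ((0:ℂ), q) :=
        dotC_gradP a₁
      have e₂ : dotC (gradP a₂ (s:ℂ) q) q = fderiv ℂ a₂ ((s:ℂ), q) ((0:ℂ), q) :=
        dotC_gradP a₂
      have hfd : fderiv ℂ b ((s:ℂ), q) =
          fderiv ℂ a₁ ((s:ℂ), q) - fderiv ℂ a₂ ((s:ℂ), q) := fderiv_fun_sub hd₁ hd₂
      have h2' := h2 s q hq
      rw [e₁, e₂] at h2'
      rw [hfd, ContinuousLinearMap.sub_apply]; simp only [hbdef]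
      linear_combination h2'
    -- the function h(t) = t * F t has zero derivative on (0,1]
    have hh : ∀ t ∈ Set.Ioc (0:ℝ) 1, HasDerivAt (fun u : ℝ => (u:ℂ) * F (u:ℂ)) 0 t := by
      intro t ht
      have htle : ‖((t:ℝ):ℂ)‖ ≤ 1 := by
        rw [Complex.norm_real, Real.norm_eq_abs, abs_of_pos ht.1]; exact ht.2
      have hq : ((t:ℂ) • p) ∈ Ccone n r₀ ν := smul_mem_Ccone hp ht.1 ht.2
      have hFt := hF (t:ℂ) htle
      have hmulC : HasDerivAt (fun u : ℂ => u * F u)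
          (1 * F (t:ℂ) + (t:ℂ) * fderiv ℂ b ((s:ℂ), (t:ℂ) • p) ((0:ℂ), p)) (t:ℂ) :=
        (hasDerivAt_id (t:ℂ)).mul hFt
      have hz : 1 * F (t:ℂ) + (t:ℂ) * fderiv ℂ b ((s:ℂ), (t:ℂ) • p) ((0:ℂ), p) = 0 := by
        have hsm : (((0:ℂ), (t:ℂ) • p) : ℂ × EuclideanSpace ℂ (Fin n))
            = (t:ℂ) • (((0:ℂ), p) : ℂ × EuclideanSpace ℂ (Fin n)) := by
          simp [Prod.smul_mk]
        have := hrel ((t:ℂ) • p) hq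
        rw [hsm, map_smul, smul_eq_mul] at this
        rw [one_mul]
        exact this
      rw [hz] at hmulC
      exact hmulC.comp_ofReal
    -- constancy of t * F t on [ε, 1]
    have hconst : ∀ ε ∈ Set.Ioc (0:ℝ) 1, (ε:ℂ) * F (ε:ℂ) = F 1 := by
      intro ε hε
      have hsub : Set.Icc ε 1 ⊆ Set.Ioc (0:ℝ) 1 := fun x hx => ⟨lt_of_lt_of_le hε.1 hx.1, hx.2⟩
      have hcont : ContinuousOn (fun u : ℝ => (u:ℂ) * F (u:ℂ)) (Set.Icc ε 1) :=
        fun x hx => ((hh x (hsub hx)).continuousAt).continuousWithinAt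
      have hder : ∀ x ∈ Set.Ico ε 1, HasDerivWithinAt (fun u : ℝ => (u:ℂ) * F (u:ℂ)) 0 (Set.Ici x) x :=
        fun x hx => ((hh x (hsub ⟨hx.1, hx.2.le⟩)).hasDerivWithinAt)
      have := constant_of_has_deriv_right_zero hcont hder 1 (Set.right_mem_Icc.mpr hε.2)
      simpa using this.symm
    -- limit as ε → 0
    have hF0 : ContinuousAt F 0 := by
      have hmem : ((s:ℂ), (0:ℂ) • p) ∈ U := by
        refine hmemU _ _ hsS ?_
        simp [hr₀]
      have hdb : DifferentiableAt ℂ b ((s:ℂ), (0:ℂ) • p) :=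
        hb.differentiableAt (hUopen.mem_nhds hmem)
      have hγc : Continuous (fun t : ℂ => (((s:ℂ), t • p) : ℂ × EuclideanSpace ℂ (Fin n))) :=
        continuous_const.prodMk (continuous_id.smul continuous_const)
      exact ContinuousAt.comp (g := b) (f := fun t : ℂ => (((s:ℂ), t • p) : ℂ × EuclideanSpace ℂ (Fin n)))
        (x := (0:ℂ)) hdb.continuousAt hγc.continuousAt
    have hlim : Tendsto (fun ε : ℝ => (ε:ℂ) * F (ε:ℂ)) (nhdsWithin 0 (Set.Ioi 0))
        (nhds ((0:ℂ) * F 0)) := by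
      have h1' : Tendsto (fun ε : ℝ => ((ε:ℝ):ℂ)) (nhds 0) (nhds (0:ℂ)) := by
        simpa using Complex.continuous_ofReal.tendsto (0:ℝ)
      have hF0' : Tendsto F (nhds (0:ℂ)) (nhds (F 0)) := hF0
      have h2' : Tendsto (fun ε : ℝ => F ((ε:ℝ):ℂ)) (nhds 0) (nhds (F 0)) :=
        hF0'.comp h1'
      exact (h1'.mul h2').mono_left nhdsWithin_le_nhds
    have heq : ∀ᶠ (ε : ℝ) in nhdsWithin (0:ℝ) (Set.Ioi 0), (ε:ℂ) * F (ε:ℂ) = F 1 := by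
      filter_upwards [Ioc_mem_nhdsGT_of_mem (by norm_num : (0:ℝ) ∈ Set.Ico (0:ℝ) 1)] with ε hε
      exact hconst ε hε
    have hlim2 : Tendsto (fun _ : ℝ => F 1) (nhdsWithin (0:ℝ) (Set.Ioi 0))
        (nhds ((0:ℂ) * F 0)) := hlim.congr' heq
    have hF1 : F 1 = 0 := by
      have := tendsto_nhds_unique hlim2 tendsto_const_nhds
      simpa using this.symm
    simpa [hFdef, one_smul] using hF1
  -- Step B : analytic continuation in s
  intro s hs p hp
  set f : ℂ → ℂ := fun z => b (z, p) with hfdef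
  have hf : DifferentiableOn ℂ f S := by
    intro z hz
    have hmem : (z, p) ∈ U := hmemU _ _ hz hp.1
    have hdb : DifferentiableAt ℂ b (z, p) := hb.differentiableAt (hUopen.mem_nhds hmem)
    exact (hdb.comp z ((differentiableAt_id (𝕜 := ℂ) (x := z)).prodMk (differentiableAt_const p))).differentiableWithinAt
  have hanal : AnalyticOnNhd ℂ f S := hf.analyticOnNhd hSopen
  have hconv : Convex ℝ S := by
    have : S = Complex.im ⁻¹' (Set.Ioo (-R₀) R₀) := by
      ext z; simp [hS, abs_lt]
    rw [this]
    exact (convex_Ioo (-R₀) R₀).linear_preimage Complex.imLm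
  have hpre : IsPreconnected S := hconv.isPreconnected
  have h0S : (0:ℂ) ∈ S := by simp [hS, hR₀]
  have hfreq : ∃ᶠ z in nhdsWithin (0:ℂ) {(0:ℂ)}ᶜ, f z = 0 := by
    have hseq : Tendsto (fun k : ℕ => (((1:ℝ)/(k+1) : ℝ) : ℂ)) atTop
        (nhdsWithin (0:ℂ) {(0:ℂ)}ᶜ) := by
      refine tendsto_nhdsWithin_of_tendsto_nhds_of_eventually_within _ ?_ ?_
      · have : Tendsto (fun k : ℕ => ((1:ℝ)/(k+1) : ℝ)) atTop (nhds 0) :=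
          tendsto_one_div_add_atTop_nhds_zero_nat
        have := (Complex.continuous_ofReal.tendsto 0).comp this
        simpa [Function.comp_def] using this
      · refine Filter.Eventually.of_forall fun k => ?_
        simp only [Set.mem_compl_iff, Set.mem_singleton_iff]
        intro hk
        have : ((1:ℝ)/(k+1) : ℝ) = 0 := by exact_mod_cast hk
        have hkpos : (0:ℝ) < 1/(k+1) := by positivity
        linarith
    exact hseq.frequently (Filter.Frequently.of_forall fun k => keyA _ p hp)
  have hzero := hanal.eqOn_zero_of_preconnected_of_frequently_eq_zero hpre h0S hfreq
  have := hzero hs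
  simpa [hfdef, hbdef, sub_eq_zero] using this
end
end

section
/- Let n ≥ 2, let Ω ⊆ ℝⁿ be open, let U ⊆ ℂ × ℂⁿ be open, and let a : ℂ × ℂⁿ → ℂ be analytic on U. Fix s ∈ ℂ and an isotropic vector p ∈ ℂⁿ (i.e. p·p = 0), and assume (s + x·p, p) ∈ U for every x ∈ Ω. Then the vector field F : Ω → ℂⁿ, F(x) := a(s + x·p, p) p, is differentiable on Ω and div F(x) = 0 for every x ∈ Ω. In other words, the complex affine function u_{s,p}(x) = s + x·p is a classical solution of the quasilinear equation div(a(u, ∇u) ∇u) = 0 in Ω (Claim 4.1 of the paper). -/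
open scoped BigOperators

noncomputable section

/-- The affine function u_{s,p}(x) = s + x·p. -/
def usp {n : ℕ} (s : ℂ) (p : EuclideanSpace ℂ (Fin n))
    (x : EuclideanSpace ℝ (Fin n)) : ℂ :=
  s + dotC (cplx x) p

/-- Divergence of a vector field F : ℝⁿ → ℂⁿ at a point. -/
def divergence {n : ℕ} (F : EuclideanSpace ℝ (Fin n) → EuclideanSpace ℂ (Fin n))
    (x : EuclideanSpace ℝ (Fin n)) : ℂ :=
  ∑ j, fderiv ℝ F x (EuclideanSpace.single j 1) j

/-- Claim 4.1: the complex affine function u_{s,p} is a classical solution of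
div(a(u,∇u)∇u) = 0 whenever p·p = 0. -/
theorem affine_solution {n : ℕ} (hn : 2 ≤ n)
    (Ω : Set (EuclideanSpace ℝ (Fin n))) (hΩ : IsOpen Ω)
    (U : Set (ℂ × EuclideanSpace ℂ (Fin n))) (hU : IsOpen U)
    (a : ℂ × EuclideanSpace ℂ (Fin n) → ℂ) (ha : DifferentiableOn ℂ a U)
    (s : ℂ) (p : EuclideanSpace ℂ (Fin n)) (hp : dotC p p = 0)
    (hdom : ∀ x ∈ Ω, (usp s p x, p) ∈ U) :
    ∀ x ∈ Ω,
      DifferentiableAt ℝ (fun y => a (usp s p y, p) • p) x ∧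
      divergence (fun y => a (usp s p y, p) • p) x = 0 := by
  intro x hx
  classical
  -- the linear map v ↦ ∑ j, p j * v j
  set L : EuclideanSpace ℝ (Fin n) →L[ℝ] ℂ :=
    ∑ j, p j • (Complex.ofRealCLM.comp (EuclideanSpace.proj j)) with hLdef
  have hLapp : ∀ v : EuclideanSpace ℝ (Fin n), L v = ∑ j, p j * (v j : ℂ) := by
    intro v
    simp [hLdef, ContinuousLinearMap.sum_apply]
  have husp : (fun y : EuclideanSpace ℝ (Fin n) => usp s p y) = fun y => s + L y := by
    funext y
    rw [hLapp]
    simp [usp, dotC, cplx, mul_comm]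
  have hu : HasFDerivAt (usp s p) L x := by
    rw [show usp s p = fun y => s + L y from husp]
    exact (L.hasFDerivAt).const_add s
  have hpair : HasFDerivAt (fun y => (usp s p y, p))
      (L.prod (0 : EuclideanSpace ℝ (Fin n) →L[ℝ] EuclideanSpace ℂ (Fin n))) x :=
    hu.prodMk (hasFDerivAt_const p x)
  have haz : DifferentiableAt ℂ a (usp s p x, p) :=
    ha.differentiableAt (hU.mem_nhds (hdom x hx))
  set A := fderiv ℂ a (usp s p x, p) with hAdef
  have hA : HasFDerivAt a (A.restrictScalars ℝ) (usp s p x, p) :=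
    haz.hasFDerivAt.restrictScalars ℝ
  have hg : HasFDerivAt (fun y => a (usp s p y, p))
      ((A.restrictScalars ℝ).comp (L.prod 0)) x := hA.comp x hpair
  set M : ℂ →L[ℝ] EuclideanSpace ℂ (Fin n) :=
    (ContinuousLinearMap.id ℝ ℂ).smulRight p with hMdef
  have hF : HasFDerivAt (fun y => a (usp s p y, p) • p)
      (M.comp ((A.restrictScalars ℝ).comp (L.prod 0))) x := by
    have hM : HasFDerivAt (fun c : ℂ => c • p) M (a (usp s p x, p)) := by
      exact M.hasFDerivAt
    exact hM.comp x hg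
  refine ⟨hF.differentiableAt, ?_⟩
  rw [divergence, hF.fderiv]
  have hLe : ∀ j, L (EuclideanSpace.single j (1 : ℝ)) = p j := by
    intro j
    rw [hLapp]
    simp [EuclideanSpace.single_apply, apply_ite, Finset.sum_ite_eq']
  have key : ∀ j, (M.comp ((A.restrictScalars ℝ).comp (L.prod 0)))
      (EuclideanSpace.single j (1 : ℝ)) j
      = A (p j * p j, 0) := by
    intro j
    simp only [ContinuousLinearMap.comp_apply, ContinuousLinearMap.prod_apply,
      ContinuousLinearMap.zero_apply, ContinuousLinearMap.coe_restrictScalars',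
      hLe, hMdef, ContinuousLinearMap.smulRight_apply, ContinuousLinearMap.id_apply]
    have : (A (p j, 0) • p) j = A (p j, 0) * p j := by
      simp
    rw [this, mul_comm, ← smul_eq_mul, ← map_smul]
    congr 1
    simp [Prod.smul_mk, smul_eq_mul]
  calc (∑ j, (M.comp ((A.restrictScalars ℝ).comp (L.prod 0)))
      (EuclideanSpace.single j (1 : ℝ)) j)
      = ∑ j, A (p j * p j, 0) := by
        exact Finset.sum_congr rfl (fun j _ => key j)
    _ = A (∑ j, ((p j * p j, 0) : ℂ × EuclideanSpace ℂ (Fin n))) := by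
        rw [map_sum]
    _ = A (dotC p p, 0) := by
        congr 1
        rw [Prod.ext_iff]
        refine ⟨?_, ?_⟩
        · simp [Prod.fst_sum, dotC]
        · simp [Prod.snd_sum]
    _ = 0 := by rw [hp]; exact A.map_zero
end
end

section
/- Let n = 2, r₀ > 0, and let ν ∈ ℝ² be a nonzero vector. Then a vector p ∈ ℂ² belongs to 𝒞(r₀) if and only if there exist p₀, q₀ ∈ ℝ² with p₀ ≠ 0, p₀·q₀ = 0, ‖q₀‖ = ‖p₀‖, ‖p₀‖ < r₀/√2, and p = p₀ + i q₀. In particular, in dimension 2 every nonzero isotropic vector p with ‖p‖ < r₀ automatically satisfies p·ν ≠ 0, i.e. 𝒞(r₀) = 𝒜(r₀) ∖ {0}. (Part (6) of Lemma 6.2.) -/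
open scoped BigOperators

noncomputable section

/-- Euclidean dot product on ℝⁿ. -/
def dotR {n : ℕ} (v w : EuclideanSpace ℝ (Fin n)) : ℝ := ∑ j, v j * w j

/-- The set 𝒜(r₀) of small isotropic vectors. -/
def Acone (n : ℕ) (r₀ : ℝ) : Set (EuclideanSpace ℂ (Fin n)) :=
  {p | ‖p‖ < r₀ ∧ dotC p p = 0}

lemma euclidR_eq_zero (v : EuclideanSpace ℝ (Fin 2)) (h0 : v 0 = 0) (h1 : v 1 = 0) :
    v = 0 := by
  ext j; fin_cases j <;> simpa

lemma euclidC_eq_zero (v : EuclideanSpace ℂ (Fin 2)) (h0 : v 0 = 0) (h1 : v 1 = 0) :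
    v = 0 := by
  ext j; fin_cases j <;> simpa

lemma normR2 (v : EuclideanSpace ℝ (Fin 2)) :
    ‖v‖ = Real.sqrt ((v 0)^2 + (v 1)^2) := by
  rw [EuclideanSpace.norm_eq]
  simp [Fin.sum_univ_two, Real.norm_eq_abs, sq_abs]

lemma normC2 (p : EuclideanSpace ℂ (Fin 2)) :
    ‖p‖ = Real.sqrt ((p 0).re^2 + (p 0).im^2 + ((p 1).re^2 + (p 1).im^2)) := by
  rw [EuclideanSpace.norm_eq]
  congr 1
  simp only [Fin.sum_univ_two, Complex.sq_norm, Complex.normSq_apply]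
  ring

lemma dotC2 (p q : EuclideanSpace ℂ (Fin 2)) :
    dotC p q = p 0 * q 0 + p 1 * q 1 := by
  simp [dotC, Fin.sum_univ_two]

lemma dotR2 (v w : EuclideanSpace ℝ (Fin 2)) :
    dotR v w = v 0 * w 0 + v 1 * w 1 := by
  simp [dotR, Fin.sum_univ_two]

/-- Core 2-dimensional linear algebra fact. -/
lemma key_lin (a0 a1 b0 b1 ν0 ν1 : ℝ)
    (h1 : a0^2 + a1^2 = b0^2 + b1^2) (h2 : a0*b0 + a1*b1 = 0)
    (ha : ¬ (a0 = 0 ∧ a1 = 0))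
    (hA : a0*ν0 + a1*ν1 = 0) (hB : b0*ν0 + b1*ν1 = 0) :
    ν0 = 0 ∧ ν1 = 0 := by
  have hd : (a0*b1 - a1*b0)^2 = (a0^2 + a1^2)^2 := by
    linear_combination (-(a0^2+a1^2))*h1 - (a0*b0+a1*b1)*h2
  have hpos : 0 < a0^2 + a1^2 := by
    have : a0 ≠ 0 ∨ a1 ≠ 0 := by tauto
    rcases this with h | h <;> positivity
  have hdne : a0*b1 - a1*b0 ≠ 0 := by
    intro h
    rw [h] at hd
    nlinarith
  have hdet0 : (a0*b1 - a1*b0)*ν0 = 0 := by linear_combination b1*hA - a1*hB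
  have hdet1 : (a0*b1 - a1*b0)*ν1 = 0 := by linear_combination a0*hB - b0*hA
  refine ⟨?_, ?_⟩
  · rcases mul_eq_zero.mp hdet0 with h | h
    · exact absurd h hdne
    · exact h
  · rcases mul_eq_zero.mp hdet1 with h | h
    · exact absurd h hdne
    · exact h

/-- In dimension 2, a nonzero isotropic vector is never orthogonal to a nonzero
real vector. -/
lemma isotropic_not_orth {ν : EuclideanSpace ℝ (Fin 2)} (hν : ν ≠ 0)
    (p : EuclideanSpace ℂ (Fin 2)) (hiso : dotC p p = 0) (hp : p ≠ 0) :
    dotC p (cplx ν) ≠ 0 := by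
  intro h
  rw [dotC2] at hiso h
  have hre : (p 0).re^2 + (p 1).re^2 = (p 0).im^2 + (p 1).im^2 := by
    have := congrArg Complex.re hiso
    simp [Complex.add_re, Complex.mul_re] at this
    ring_nf at this ⊢
    linarith
  have him : (p 0).re*(p 0).im + (p 1).re*(p 1).im = 0 := by
    have := congrArg Complex.im hiso
    simp [Complex.add_im, Complex.mul_im] at this
    linarith
  have hA : (p 0).re * ν 0 + (p 1).re * ν 1 = 0 := by
    have := congrArg Complex.re h
    simpa [cplx, Complex.add_re, Complex.mul_re] using this
  have hB : (p 0).im * ν 0 + (p 1).im * ν 1 = 0 := by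
    have := congrArg Complex.im h
    simpa [cplx, Complex.add_im, Complex.mul_im] using this
  have ha : ¬ ((p 0).re = 0 ∧ (p 1).re = 0) := by
    rintro ⟨h0, h1⟩
    apply hp
    have him0 : (p 0).im = 0 ∧ (p 1).im = 0 := by
      constructor <;> nlinarith [sq_nonneg (p 0).im, sq_nonneg (p 1).im]
    exact euclidC_eq_zero p (Complex.ext h0 him0.1) (Complex.ext h1 him0.2)
  obtain ⟨h0, h1⟩ := key_lin _ _ _ _ _ _ hre him ha hA hB
  exact hν (euclidR_eq_zero ν h0 h1)

lemma mem_iff_exists {r₀ : ℝ} (p : EuclideanSpace ℂ (Fin 2)) :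
    (‖p‖ < r₀ ∧ dotC p p = 0 ∧ p ≠ 0) ↔
      ∃ p₀ q₀ : EuclideanSpace ℝ (Fin 2),
        p₀ ≠ 0 ∧ dotR p₀ q₀ = 0 ∧ ‖q₀‖ = ‖p₀‖ ∧ ‖p₀‖ < r₀ / Real.sqrt 2 ∧
        p = cplx p₀ + Complex.I • cplx q₀ := by
  have s2pos : (0:ℝ) < Real.sqrt 2 := by positivity
  constructor
  · rintro ⟨hnorm, hiso, hp⟩
    set p₀ : EuclideanSpace ℝ (Fin 2) :=
      (WithLp.equiv 2 (Fin 2 → ℝ)).symm (fun j => (p j).re) with hp₀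
    set q₀ : EuclideanSpace ℝ (Fin 2) :=
      (WithLp.equiv 2 (Fin 2 → ℝ)).symm (fun j => (p j).im) with hq₀
    have hp₀j : ∀ j, p₀ j = (p j).re := fun _ => rfl
    have hq₀j : ∀ j, q₀ j = (p j).im := fun _ => rfl
    rw [dotC2] at hiso
    have hre : (p 0).re^2 + (p 1).re^2 = (p 0).im^2 + (p 1).im^2 := by
      have := congrArg Complex.re hiso
      simp [Complex.add_re, Complex.mul_re] at this
      ring_nf at this ⊢
      linarith
    have him : (p 0).re*(p 0).im + (p 1).re*(p 1).im = 0 := by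
      have := congrArg Complex.im hiso
      simp [Complex.add_im, Complex.mul_im] at this
      linarith
    have hp0ne : p₀ ≠ 0 := by
      intro h
      apply hp
      have h0 : (p 0).re = 0 := by rw [← hp₀j 0, h]; rfl
      have h1 : (p 1).re = 0 := by rw [← hp₀j 1, h]; rfl
      have him0 : (p 0).im = 0 ∧ (p 1).im = 0 := by
        constructor <;> nlinarith [sq_nonneg (p 0).im, sq_nonneg (p 1).im]
      exact euclidC_eq_zero p (Complex.ext h0 him0.1) (Complex.ext h1 him0.2)
    refine ⟨p₀, q₀, hp0ne, ?_, ?_, ?_, ?_⟩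
    · rw [dotR2, hp₀j, hp₀j, hq₀j, hq₀j]; exact him
    · rw [normR2, normR2, hp₀j, hp₀j, hq₀j, hq₀j, hre]
    · have hnp : ‖p‖ = Real.sqrt 2 * ‖p₀‖ := by
        rw [normC2, normR2, hp₀j, hp₀j, ← Real.sqrt_mul (by norm_num)]
        congr 1
        nlinarith
      rw [lt_div_iff₀ s2pos, mul_comm, ← hnp]
      exact hnorm
    · ext j
      fin_cases j <;>
        · apply Complex.ext <;>
            simp [cplx, hp₀j, hq₀j, Complex.add_re, Complex.add_im]
  · rintro ⟨p₀, q₀, hp0ne, hdR, hnq, hnp, rfl⟩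
    have hj : ∀ j : Fin 2, (cplx p₀ + Complex.I • cplx q₀) j = (p₀ j : ℂ) + Complex.I * (q₀ j : ℂ) :=
      fun _ => rfl
    rw [dotR2] at hdR
    have hnq2 : (q₀ 0)^2 + (q₀ 1)^2 = (p₀ 0)^2 + (p₀ 1)^2 := by
      have := congrArg (fun x => x^2) hnq
      simp only [normR2] at this
      rwa [Real.sq_sqrt (by positivity), Real.sq_sqrt (by positivity)] at this
    refine ⟨?_, ?_, ?_⟩
    · have hnp' : ‖cplx p₀ + Complex.I • cplx q₀‖ = Real.sqrt 2 * ‖p₀‖ := by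
        rw [normC2, normR2, ← Real.sqrt_mul (by norm_num)]
        simp only [hj]
        congr 1
        simp [Complex.add_re, Complex.add_im]
        nlinarith
      rw [hnp']
      calc Real.sqrt 2 * ‖p₀‖ < Real.sqrt 2 * (r₀ / Real.sqrt 2) := by
            exact mul_lt_mul_of_pos_left hnp s2pos
        _ = r₀ := by field_simp
    · rw [dotC2]
      simp only [hj]
      apply Complex.ext <;>
        simp [Complex.add_re, Complex.add_im, Complex.mul_re, Complex.mul_im] <;>
        nlinarith
    · intro h
      apply hp0ne
      have h0 : ((cplx p₀ + Complex.I • cplx q₀) 0) = 0 := by rw [h]; rfl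
      have h1 : ((cplx p₀ + Complex.I • cplx q₀) 1) = 0 := by rw [h]; rfl
      rw [hj] at h0 h1
      have e0 : p₀ 0 = 0 := by
        have := congrArg Complex.re h0; simpa using this
      have e1 : p₀ 1 = 0 := by
        have := congrArg Complex.re h1; simpa using this
      exact euclidR_eq_zero p₀ e0 e1

/-- Part (6) of Lemma 6.2: in dimension 2, 𝒞(r₀) consists exactly of the
vectors p₀ + i q₀ with p₀, q₀ real, orthogonal, of equal length, p₀ ≠ 0 and
‖p₀‖ < r₀/√2; in particular 𝒞(r₀) = 𝒜(r₀) ∖ {0}. -/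
theorem Ccone_dim_two {r₀ : ℝ} (hr₀ : 0 < r₀)
    (ν : EuclideanSpace ℝ (Fin 2)) (hν : ν ≠ 0) :
    (∀ p : EuclideanSpace ℂ (Fin 2),
      p ∈ Ccone 2 r₀ ν ↔
        ∃ p₀ q₀ : EuclideanSpace ℝ (Fin 2),
          p₀ ≠ 0 ∧ dotR p₀ q₀ = 0 ∧ ‖q₀‖ = ‖p₀‖ ∧ ‖p₀‖ < r₀ / Real.sqrt 2 ∧
          p = cplx p₀ + Complex.I • cplx q₀) ∧
    Ccone 2 r₀ ν = Acone 2 r₀ \ {0} := by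
  have hmem : ∀ p : EuclideanSpace ℂ (Fin 2),
      p ∈ Ccone 2 r₀ ν ↔ (‖p‖ < r₀ ∧ dotC p p = 0 ∧ p ≠ 0) := by
    intro p
    constructor
    · rintro ⟨h1, h2, h3⟩
      refine ⟨h1, h2, ?_⟩
      rintro rfl
      exact h3 (by simp [dotC])
    · rintro ⟨h1, h2, h3⟩
      exact ⟨h1, h2, isotropic_not_orth hν p h2 h3⟩
  constructor
  · intro p
    rw [hmem p, mem_iff_exists]
  · ext p
    rw [Set.mem_diff, Set.mem_singleton_iff]
    rw [hmem p]
    constructor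
    · rintro ⟨h1, h2, h3⟩; exact ⟨⟨h1, h2⟩, h3⟩
    · rintro ⟨⟨h1, h2⟩, h3⟩; exact ⟨h1, h2, h3⟩
end
end

section
/- Let n ≥ 2, let Ω ⊆ ℝⁿ be open, let U ⊆ ℂ × ℂⁿ be open, and let a : ℂ × ℂⁿ → ℂ be analytic on U. Fix s ∈ ℂ and an isotropic vector p ∈ ℂⁿ (p·p = 0) with (s + x·p, p) ∈ U for all x ∈ Ω. Then the linear function v_p(x) := p·x solves the linearized equation: the vector field G(x) := a(s + x·p, p) p + p [ (∇_p a(s + x·p, p))·p + ∂_s a(s + x·p, p) (p·x) ] is differentiable on Ω and div G(x) = 0 for every x ∈ Ω. (Computation in the proof of Theorem 6.3: v_p solves the linearized problem (6.1)–(6.2) with boundary data h(x) = p·x.) -/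
open scoped BigOperators

noncomputable section

open Metric Complex MeasureTheory intervalIntegral Filter in
set_option maxHeartbeats 1000000 in
/-- Mini-Hartogs: the directional derivative of a holomorphic function of several complex
variables is holomorphic along a complex line through a fixed second coordinate. -/
lemma diff_fderiv_slice {E : Type*} [NormedAddCommGroup E] [NormedSpace ℂ E] {f : ℂ × E → ℂ} {U : Set (ℂ × E)} (hU : IsOpen U)
    (hf : DifferentiableOn ℂ f U)
    {z₀ : ℂ} {p : E} (hmem : (z₀, p) ∈ U) (w : ℂ × E) :
    DifferentiableAt ℂ (fun z => fderiv ℂ f (z, p) w) z₀ := by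
  set g : ℂ → ℂ → ℂ := fun z t => f ((z, p) + t • w) with hg
  have hcurve : ∀ (z : ℂ) (t : ℂ), HasDerivAt (fun t : ℂ => (z, p) + t • w) w t := by
    intro z t
    simpa using ((hasDerivAt_id t).smul_const w).const_add ((z : ℂ), p)
  set W : Set (ℂ × ℂ) := {q : ℂ × ℂ | ((q.1, p) + q.2 • w) ∈ U} with hW
  have hφ : Continuous fun q : ℂ × ℂ => ((q.1, p) + q.2 • w) :=
    ((continuous_fst.prodMk continuous_const).add
      (continuous_snd.smul continuous_const))
  have hWopen : IsOpen W := hU.preimage hφ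
  have hW0 : ((z₀ : ℂ), (0 : ℂ)) ∈ W := by simp [hW, hmem]
  obtain ⟨ε, hε, hball⟩ := Metric.isOpen_iff.1 hWopen _ hW0
  have hrpos : 0 < ε / 2 := by positivity
  set r : ℝ := ε / 2 with hr
  have hsub : closedBall z₀ r ×ˢ closedBall (0 : ℂ) r ⊆ W := by
    rintro q ⟨h1, h2⟩
    apply hball
    rw [← ball_prod_same]
    have hrε : r < ε := by rw [hr]; linarith
    exact ⟨mem_ball.2 (lt_of_le_of_lt (mem_closedBall.1 h1) hrε),
      mem_ball.2 (lt_of_le_of_lt (mem_closedBall.1 h2) hrε)⟩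
  -- separate differentiability in each variable
  have hgz : ∀ z ∈ closedBall z₀ r, ∀ t ∈ closedBall (0:ℂ) r,
      HasDerivAt (fun z' => g z' t) (deriv (fun z' => g z' t) z) z := by
    intro z hz t ht
    have hq : ((z, t)) ∈ closedBall z₀ r ×ˢ closedBall (0:ℂ) r := Set.mk_mem_prod hz ht
    have hmem' : ((z, p) + t • w) ∈ U := hsub hq
    have h1 : HasDerivAt (fun z' : ℂ => (z', p) + t • w) ((1:ℂ), (0:E)) z := by
      have h2 : HasDerivAt (fun z' : ℂ => ((z', p) : ℂ × E)) ((1:ℂ), (0:E)) z := by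
        simpa using (hasDerivAt_id z).prodMk (hasDerivAt_const z p)
      simpa using h2.add_const (t • w)
    have h3 := ((hf.differentiableAt (hU.mem_nhds hmem')).hasFDerivAt).comp_hasDerivAt z h1
    exact h3.deriv ▸ h3
  have hgt : ∀ z ∈ closedBall z₀ r, ∀ t ∈ closedBall (0:ℂ) r,
      HasDerivAt (fun t' => g z t') (fderiv ℂ f ((z,p) + t • w) w) t := by
    intro z hz t ht
    have hq : ((z, t)) ∈ closedBall z₀ r ×ˢ closedBall (0:ℂ) r := Set.mk_mem_prod hz ht
    have hmem' : ((z, p) + t • w) ∈ U := hsub hq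
    exact ((hf.differentiableAt (hU.mem_nhds hmem')).hasFDerivAt).comp_hasDerivAt t (hcurve z t)
  have hkey : ∀ z ∈ closedBall z₀ r, deriv (fun t => g z t) 0 = fderiv ℂ f (z, p) w := by
    intro z hz
    have h4 := (hgt z hz 0 (mem_closedBall_self hrpos.le)).deriv
    simpa using h4
  -- uniform bound for g on the bidisc
  have hK : IsCompact (closedBall z₀ r ×ˢ closedBall (0:ℂ) r) :=
    (isCompact_closedBall _ _).prod (isCompact_closedBall _ _)
  have hgcont : ContinuousOn (fun q : ℂ × ℂ => g q.1 q.2)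
      (closedBall z₀ r ×ˢ closedBall (0:ℂ) r) :=
    hf.continuousOn.comp hφ.continuousOn (fun q hq => hsub hq)
  obtain ⟨M, hM⟩ := hK.exists_bound_of_continuousOn hgcont
  -- Cauchy integral formula for the t-derivative
  have hCauchy : ∀ z ∈ closedBall z₀ r, deriv (fun t => g z t) 0
      = (2 * Real.pi * I)⁻¹ • ∮ t in C((0:ℂ), r), (t - 0) ^ (-2 : ℤ) • g z t := by
    intro z hz
    suffices hc : DiffContOnCl ℂ (fun t => g z t) (ball (0:ℂ) r) by
      have h := hc.deriv_eq_smul_circleIntegral hrpos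
      have hne : (2 * Real.pi * I : ℂ) ≠ 0 := by simp [Real.pi_ne_zero, I_ne_zero]
      have hint : (∮ t in C((0:ℂ), r), (t - 0) ^ (-2 : ℤ) • g z t)
          = ∮ t in C((0:ℂ), r), (1 / (t - 0) ^ 2) • g z t := by
        congr 1; funext t; simp [zpow_neg]
      rw [hint, h, smul_smul, inv_mul_cancel₀ hne, one_smul]
    refine DifferentiableOn.diffContOnCl ?_
    rw [closure_ball (0:ℂ) hrpos.ne']
    intro t ht
    exact ((hgt z hz t ht).differentiableAt).differentiableWithinAt
  -- reduce to an interval integral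
  set Φ : ℂ → ℝ → ℂ := fun z θ =>
    (circleMap 0 r θ * I) • ((circleMap 0 r θ - 0) ^ (-2 : ℤ) • g z (circleMap 0 r θ)) with hΦ
  have hcirc : ∀ z : ℂ, (∮ t in C((0:ℂ), r), (t - 0) ^ (-2 : ℤ) • g z t)
      = ∫ θ in (0:ℝ)..(2 * Real.pi), Φ z θ := by
    intro z
    simp only [circleIntegral, deriv_circleMap, hΦ]
  -- derivative of the integrand in z
  set Φ' : ℂ → ℝ → ℂ := fun z θ =>
    (circleMap 0 r θ * I) • ((circleMap 0 r θ - 0) ^ (-2 : ℤ) •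
      deriv (fun z' => g z' (circleMap 0 r θ)) z) with hΦ'
  have hτmem : ∀ θ : ℝ, circleMap 0 r θ ∈ closedBall (0:ℂ) r :=
    fun θ => circleMap_mem_closedBall 0 hrpos.le θ
  have hτnorm : ∀ θ : ℝ, ‖circleMap 0 r θ‖ = r := by
    intro θ
    simp [norm_circleMap_zero, abs_of_pos hrpos]
  have hτne : ∀ θ : ℝ, circleMap 0 r θ - 0 ≠ 0 := by
    intro θ
    simpa using circleMap_ne_center (c := (0:ℂ)) hrpos.ne' (θ := θ)
  -- continuity of the integrand in θ
  have hgθ : ∀ z ∈ closedBall z₀ r, Continuous (fun θ => g z (circleMap 0 r θ)) := by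
    intro z hz
    refine hgcont.comp_continuous (continuous_const.prodMk (continuous_circleMap 0 r)) ?_
    intro θ
    exact Set.mk_mem_prod hz (hτmem θ)
  have hcontΦ : ∀ z ∈ closedBall z₀ r, Continuous (Φ z) := by
    intro z hz
    refine ((continuous_circleMap 0 r).mul continuous_const).smul ?_
    refine Continuous.fun_smul ?_ (hgθ z hz)
    exact ((continuous_circleMap 0 r).sub continuous_const).zpow₀ _ (fun θ => Or.inl (hτne θ))
  -- pointwise differentiability of the integrand in z with uniform bound
  have hρ : 0 < r / 2 := half_pos hrpos
  have hballsub : ∀ z ∈ ball z₀ (r/2), ∀ ζ ∈ closedBall z (r/2), ζ ∈ closedBall z₀ r := by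
    intro z hz ζ hζ
    have := dist_triangle ζ z z₀
    rw [mem_closedBall] at *
    rw [mem_ball] at hz
    linarith
  have hderb : ∀ θ : ℝ, ∀ z ∈ ball z₀ (r/2),
      ‖deriv (fun z' => g z' (circleMap 0 r θ)) z‖ ≤ M / (r/2) := by
    intro θ z hz
    refine Complex.norm_deriv_le_of_forall_mem_sphere_norm_le hρ ?_ ?_
    · refine DifferentiableOn.diffContOnCl ?_
      rw [closure_ball z hρ.ne']
      intro ζ hζ
      exact ((hgz ζ (hballsub z hz ζ hζ) _ (hτmem θ)).differentiableAt).differentiableWithinAt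
    · intro ζ hζ
      have hζ' : ζ ∈ closedBall z₀ r := hballsub z hz ζ (sphere_subset_closedBall hζ)
      exact hM (ζ, circleMap 0 r θ) (Set.mk_mem_prod hζ' (hτmem θ))
  have hbound : ∀ θ : ℝ, ∀ z ∈ ball z₀ (r/2), ‖Φ' z θ‖ ≤ r * ((r ^ (-2 : ℤ)) * (M / (r/2))) := by
    intro θ z hz
    have h1 : ‖circleMap 0 r θ * I‖ = r := by
      rw [norm_mul, hτnorm θ]
      simp
    have h2 : ‖(circleMap 0 r θ - 0) ^ (-2 : ℤ)‖ = r ^ (-2 : ℤ) := by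
      rw [norm_zpow, sub_zero, hτnorm θ]
    have hgoal : ‖Φ' z θ‖ = r * ((r ^ (-2 : ℤ)) * ‖deriv (fun z' => g z' (circleMap 0 r θ)) z‖) := by
      rw [hΦ']
      simp only [norm_smul, h1, h2]
    rw [hgoal]
    have h3 := hderb θ z hz
    have h4 : (0:ℝ) ≤ r ^ (-2 : ℤ) := by positivity
    exact mul_le_mul_of_nonneg_left (mul_le_mul_of_nonneg_left h3 h4) hrpos.le
  -- measurability of Φ' z₀ via pointwise limits of slopes
  have hδ : ∀ k : ℕ, (0:ℝ) < (r/2) * (1/(k+1)) := by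
    intro k
    positivity
  have hδle : ∀ k : ℕ, (r/2) * (1/(k+1)) ≤ r := by
    intro k
    have h5 : (1:ℝ)/(k+1) ≤ 1 := by
      rw [div_le_one (by positivity)]
      linarith [Nat.cast_nonneg (α := ℝ) k]
    nlinarith
  have hzkmem : ∀ k : ℕ, z₀ + (((r/2) * (1/(k+1)) : ℝ) : ℂ) ∈ closedBall z₀ r := by
    intro k
    rw [mem_closedBall]
    rw [dist_eq_norm]
    simp only [add_sub_cancel_left]
    rw [Complex.norm_real]
    rw [Real.norm_eq_abs, abs_of_pos (hδ k)]
    exact hδle k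
  have hDmeas : StronglyMeasurable (fun θ => deriv (fun z' => g z' (circleMap 0 r θ)) z₀) := by
    apply stronglyMeasurable_of_tendsto (f := fun (k : ℕ) (θ : ℝ) =>
      slope (fun z' => g z' (circleMap 0 r θ)) z₀ (z₀ + (((r/2) * (1/(k+1)) : ℝ) : ℂ))) atTop
    · intro k
      apply Continuous.stronglyMeasurable
      have hc1 : Continuous (fun θ => g (z₀ + (((r/2) * (1/(k+1)) : ℝ) : ℂ)) (circleMap 0 r θ)) := by
        refine hgcont.comp_continuous (continuous_const.prodMk (continuous_circleMap 0 r)) ?_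
        intro θ
        exact Set.mk_mem_prod (hzkmem k) (hτmem θ)
      have hc2 : Continuous (fun θ => g z₀ (circleMap 0 r θ)) :=
        hgθ z₀ (mem_closedBall_self hrpos.le)
      simp only [slope_def_field]
      exact (hc1.sub hc2).div_const _
    · rw [tendsto_pi_nhds]
      intro θ
      have hD := hgz z₀ (mem_closedBall_self hrpos.le) _ (hτmem θ)
      rw [hasDerivAt_iff_tendsto_slope] at hD
      refine hD.comp ?_
      rw [tendsto_nhdsWithin_iff]
      constructor
      · have h6 : Filter.Tendsto (fun k : ℕ => ((r/2) * (1/(k+1)) : ℝ)) atTop (nhds 0) := by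
          have h7 : Filter.Tendsto (fun k : ℕ => (1/(k+1) : ℝ)) atTop (nhds 0) :=
            tendsto_one_div_add_atTop_nhds_zero_nat
          have h8 := h7.const_mul (r/2)
          simpa using h8
        have h9 := (Complex.continuous_ofReal.tendsto 0).comp h6
        rw [Complex.ofReal_zero] at h9
        have h10 := h9.const_add z₀
        rw [add_zero] at h10
        exact h10
      · refine Filter.Eventually.of_forall (fun k => ?_)
        simp only [Set.mem_compl_iff, Set.mem_singleton_iff]
        intro hcontra
        have h11 : (((r/2) * (1/(k+1)) : ℝ) : ℂ) = 0 := by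
          have := congrArg (fun z => z - z₀) hcontra
          simpa [add_sub_cancel_left] using this
        rw [Complex.ofReal_eq_zero] at h11
        exact (hδ k).ne' h11
  have hΦ'meas : AEStronglyMeasurable (Φ' z₀)
      (MeasureTheory.volume.restrict (Set.uIoc (0:ℝ) (2 * Real.pi))) := by
    apply StronglyMeasurable.aestronglyMeasurable
    refine StronglyMeasurable.smul (f := fun θ => circleMap 0 r θ * I)
      (g := fun θ => (circleMap 0 r θ - 0) ^ (-2 : ℤ) • deriv (fun z' => g z' (circleMap 0 r θ)) z₀) ?_ ?_
    · exact ((continuous_circleMap 0 r).mul continuous_const).stronglyMeasurable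
    apply StronglyMeasurable.smul (f := fun θ => (circleMap 0 r θ - 0) ^ (-2 : ℤ)) ?_ hDmeas
    exact (((continuous_circleMap 0 r).sub continuous_const).zpow₀ _
      (fun θ => Or.inl (hτne θ))).stronglyMeasurable
  -- differentiate under the integral sign
  have hdiffΦ : ∀ (θ : ℝ), ∀ z ∈ ball z₀ (r/2), HasDerivAt (fun z' => Φ z' θ) (Φ' z θ) z := by
    intro θ z hz
    have hz' : z ∈ closedBall z₀ r := hballsub z hz z (mem_closedBall_self hρ.le)
    have h12 := hgz z hz' _ (hτmem θ)
    exact (h12.const_smul ((circleMap 0 r θ - 0) ^ (-2 : ℤ))).const_smul (circleMap 0 r θ * I)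
  obtain ⟨-, hDI⟩ := intervalIntegral.hasDerivAt_integral_of_dominated_loc_of_deriv_le
    (F := Φ) (F' := Φ') (x₀ := z₀) (a := 0) (b := 2 * Real.pi)
    (bound := fun _ => r * ((r ^ (-2 : ℤ)) * (M / (r/2)))) (ball_mem_nhds z₀ hρ)
    (Filter.eventually_of_mem (closedBall_mem_nhds z₀ hrpos)
      (fun z hz => (hcontΦ z hz).aestronglyMeasurable))
    ((hcontΦ z₀ (mem_closedBall_self hrpos.le)).intervalIntegrable _ _)
    hΦ'meas
    (Filter.Eventually.of_forall (fun θ _ z hz => hbound θ z hz))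
    (intervalIntegrable_const)
    (Filter.Eventually.of_forall (fun θ _ z hz => hdiffΦ θ z hz))
  have heq : (fun z => fderiv ℂ f (z, p) w) =ᶠ[nhds z₀]
      fun z => (2 * Real.pi * I)⁻¹ • ∫ θ in (0:ℝ)..(2 * Real.pi), Φ z θ := by
    filter_upwards [closedBall_mem_nhds z₀ hrpos] with z hz
    rw [← hkey z hz, hCauchy z hz, hcirc z]
  exact ((hDI.differentiableAt).const_smul ((2 * Real.pi * I)⁻¹ : ℂ)).congr_of_eventuallyEq heq


open Metric Complex MeasureTheory intervalIntegral Filter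

-- the derivative of usp
def Lmap {n : ℕ} (p : EuclideanSpace ℂ (Fin n)) : EuclideanSpace ℝ (Fin n) →L[ℝ] ℂ :=
  ∑ j, p j • (Complex.ofRealCLM.comp (EuclideanSpace.proj j))

lemma Lmap_single {n : ℕ} (p : EuclideanSpace ℂ (Fin n)) (i : Fin n) : Lmap p (EuclideanSpace.single i 1) = p i := by
  simp only [Lmap, ContinuousLinearMap.sum_apply, ContinuousLinearMap.smul_apply,
    ContinuousLinearMap.coe_comp', Function.comp_apply, Complex.ofRealCLM_apply]
  have : ∀ j : Fin n, (EuclideanSpace.proj (𝕜 := ℝ) j) (EuclideanSpace.single i 1)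
      = if j = i then 1 else 0 := fun j => EuclideanSpace.single_apply i 1 j
  simp only [this, smul_eq_mul, apply_ite, Complex.ofReal_one, Complex.ofReal_zero,
    mul_ite, mul_one, mul_zero]
  simp [Finset.sum_ite_eq']

lemma usp_hasFDerivAt {n : ℕ} (s : ℂ) (p : EuclideanSpace ℂ (Fin n)) (x : EuclideanSpace ℝ (Fin n)) : HasFDerivAt (usp s p) (Lmap p) x := by
  have h1 : ∀ j : Fin n, HasFDerivAt (fun v : EuclideanSpace ℝ (Fin n) => ((v j : ℝ) : ℂ) * p j)
      (p j • (Complex.ofRealCLM.comp (EuclideanSpace.proj j))) x := by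
    intro j
    have h2 := (Complex.ofRealCLM.comp (EuclideanSpace.proj (𝕜 := ℝ) j)).hasFDerivAt (x := x)
    have h3 : HasFDerivAt (fun v : EuclideanSpace ℝ (Fin n) => ((v j : ℝ) : ℂ))
        (Complex.ofRealCLM.comp (EuclideanSpace.proj j)) x := by
      exact h2
    exact h3.mul_const (p j)
  have h5 := HasFDerivAt.sum (fun j (_ : j ∈ Finset.univ) => h1 j)
  have h6 := h5.const_add s
  have hus : usp s p = fun v => s + ∑ j, ((v j : ℝ) : ℂ) * p j := by
    funext v
    simp [usp, dotC, cplx]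
  rw [hus, Lmap]
  simpa only [Finset.sum_apply] using h6


lemma sum_single_eq {n : ℕ} (p : EuclideanSpace ℂ (Fin n)) :
    ∑ j, p j • EuclideanSpace.single j (1:ℂ) = p := by
  ext i
  rw [WithLp.ofLp_sum, Finset.sum_apply]
  simp only [PiLp.smul_apply, EuclideanSpace.single_apply, smul_eq_mul, mul_ite, mul_one, mul_zero]
  simp [Finset.sum_ite_eq']


/-- Computation in the proof of Theorem 6.3: the linear function v_p(x) = p·x
solves the linearized problem, i.e. the vector field
G(x) = a(s+x·p, p) p + p [∇ₚa(s+x·p,p)·p + ∂ₛa(s+x·p,p)(p·x)]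
is divergence free. -/
theorem linear_solves_linearized {n : ℕ} (hn : 2 ≤ n)
    (Ω : Set (EuclideanSpace ℝ (Fin n))) (hΩ : IsOpen Ω)
    (U : Set (ℂ × EuclideanSpace ℂ (Fin n))) (hU : IsOpen U)
    (a : ℂ × EuclideanSpace ℂ (Fin n) → ℂ) (ha : DifferentiableOn ℂ a U)
    (s : ℂ) (p : EuclideanSpace ℂ (Fin n)) (hp : dotC p p = 0)
    (hdom : ∀ x ∈ Ω, (usp s p x, p) ∈ U) :
    ∀ x ∈ Ω,
      DifferentiableAt ℝ
        (fun y => a (usp s p y, p) • p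
          + (dotC (gradP a (usp s p y) p) p
             + dS a (usp s p y) p * dotC p (cplx y)) • p) x ∧
      divergence
        (fun y => a (usp s p y, p) • p
          + (dotC (gradP a (usp s p y) p) p
             + dS a (usp s p y) p * dotC p (cplx y)) • p) x = 0 := by
  intro x hx
  set F : ℂ → ℂ := fun z =>
    a (z, p) + (fderiv ℂ a (z, p) ((0:ℂ), p) + fderiv ℂ a (z, p) ((1:ℂ), 0) * (z - s)) with hF
  have hu₀ : (usp s p x, p) ∈ U := hdom x hx
  -- pointwise identification of the vector field with F(u(y)) • p
  have hsc : ∀ y ∈ Ω,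
      a (usp s p y, p) • p + (dotC (gradP a (usp s p y) p) p
        + dS a (usp s p y) p * dotC p (cplx y)) • p = F (usp s p y) • p := by
    intro y hy
    have hyU : (usp s p y, p) ∈ U := hdom y hy
    have hda : DifferentiableAt ℂ a (usp s p y, p) := ha.differentiableAt (hU.mem_nhds hyU)
    have hgrad : dotC (gradP a (usp s p y) p) p = fderiv ℂ a (usp s p y, p) ((0:ℂ), p) := by
      have hsum : ((0:ℂ), p) = ∑ j, (p j) • (((0:ℂ), EuclideanSpace.single j (1:ℂ)) :
          ℂ × EuclideanSpace ℂ (Fin n)) := by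
        apply Prod.ext
        · rw [Prod.fst_sum]
          simp [Prod.smul_fst]
        · rw [Prod.snd_sum]
          simp only [Prod.smul_snd]
          exact (sum_single_eq p).symm
      rw [hsum, map_sum]
      simp only [_root_.map_smul]
      simp only [dotC, gradP, smul_eq_mul, WithLp.equiv_symm_apply, PiLp.toLp_apply]
      exact Finset.sum_congr rfl (fun j _ => mul_comm _ _)
    have hdot : dotC p (cplx y) = usp s p y - s := by
      simp [usp, dotC, cplx, mul_comm]
    rw [hgrad, hdot, ← add_smul, hF]
    rfl
  -- differentiability of F at u₀
  have hd1 : DifferentiableAt ℂ (fun z => a (z, p)) (usp s p x) := by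
    have h1 : DifferentiableAt ℂ (fun z : ℂ => ((z, p) : ℂ × EuclideanSpace ℂ (Fin n)))
        (usp s p x) := differentiableAt_id.prodMk (differentiableAt_const p)
    exact (ha.differentiableAt (hU.mem_nhds hu₀)).comp (usp s p x) h1
  have hd2 := diff_fderiv_slice hU ha hu₀ (((0:ℂ), p) : ℂ × EuclideanSpace ℂ (Fin n))
  have hd3 := diff_fderiv_slice hU ha hu₀ (((1:ℂ), 0) : ℂ × EuclideanSpace ℂ (Fin n))
  have hdF : DifferentiableAt ℂ F (usp s p x) :=
    hd1.add (hd2.add (hd3.mul (differentiableAt_id.sub (differentiableAt_const s))))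
  set c : ℂ := deriv F (usp s p x) with hc
  have hFD : HasDerivAt F c (usp s p x) := hdF.hasDerivAt
  have hσ : HasFDerivAt (fun y => F (usp s p y))
      ((((ContinuousLinearMap.smulRight (1 : ℂ →L[ℂ] ℂ) c).restrictScalars ℝ)).comp (Lmap p)) x :=
    (hFD.hasFDerivAt.restrictScalars ℝ).comp x (usp_hasFDerivAt s p x)
  have hH := hσ.smul_const p
  have hEq : (fun y => a (usp s p y, p) • p + (dotC (gradP a (usp s p y) p) p
        + dS a (usp s p y) p * dotC p (cplx y)) • p)
      =ᶠ[nhds x] (fun y => F (usp s p y) • p) := by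
    filter_upwards [hΩ.mem_nhds hx] with y hy
    exact hsc y hy
  constructor
  · exact hH.differentiableAt.congr_of_eventuallyEq hEq
  · rw [divergence, hEq.fderiv_eq, hH.fderiv]
    have hval : ∀ j : Fin n,
        ((((ContinuousLinearMap.smulRight (1 : ℂ →L[ℂ] ℂ) c).restrictScalars ℝ).comp
          (Lmap p)).smulRight p) (EuclideanSpace.single j 1) = (p j * c) • p := by
      intro j
      rw [ContinuousLinearMap.smulRight_apply, ContinuousLinearMap.comp_apply, Lmap_single]
      simp
    calc ∑ j, ((((ContinuousLinearMap.smulRight (1 : ℂ →L[ℂ] ℂ) c).restrictScalars ℝ).comp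
          (Lmap p)).smulRight p) (EuclideanSpace.single j 1) j
        = ∑ j, (p j * c) * p j := by
          refine Finset.sum_congr rfl (fun j _ => ?_)
          rw [hval j]
          simp [smul_eq_mul]
      _ = c * dotC p p := by
          rw [dotC, Finset.mul_sum]
          exact Finset.sum_congr rfl (fun j _ => by ring)
      _ = 0 := by rw [hp, mul_zero]
end
end
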